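/- Let F be an r-dimensional subspace of ℝ^n with r < n, let p : ℝ^r → F be a linear isomorphism onto F, and let f : ℝ^n \ {0} → ℝ attain minima and maxima on relevant subspaces. Then for every k with 1 ≤ k ≤ r: min over (n−r+k)-dimensional subspaces S of ℝ^n of max_{x ∈ S, x ≠ 0} f(x) ≥ min over k-dimensional subspaces T of ℝ^r of max_{x̃ ∈ T, x̃ ≠ 0} f(p(x̃)). -/
import Mathlib

open Module Submodule

/-- In a finite-dimensional space over ℝ, any `k ≤ finrank` is realized by a submodule. -/
lemma exists_submodule_finrank_eq' {V : Type*} [AddCommGroup V] [Module ℝ V]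
    [FiniteDimensional ℝ V] {k : ℕ} (hk : k ≤ finrank ℝ V) :
    ∃ S : Submodule ℝ V, finrank ℝ S = k := by
  obtain ⟨v, hv⟩ := exists_linearIndependent_of_le_finrank hk
  exact ⟨span ℝ (Set.range v), by
    rw [finrank_span_eq_card hv, Fintype.card_fin]⟩

lemma submodule_exists_ne_zero_of_finrank_pos {V : Type*} [AddCommGroup V] [Module ℝ V]
    {S : Submodule ℝ V} (h : 0 < finrank ℝ S) : ∃ x ∈ S, x ≠ 0 := by
  by_contra hc
  push_neg at hc
  have : S = ⊥ := by
    ext x; simp only [Submodule.mem_bot]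
    exact ⟨fun hx => hc x hx, fun hx => hx ▸ S.zero_mem⟩
  rw [this, finrank_bot] at h
  exact lt_irrefl 0 h

/-- Min-max inequality: for an `r`-dimensional subspace `F` of `ℝ^n`
(`r < n`) with linear isomorphism `p : ℝ^r ≃ F`, and a function `f` attaining its minimum
and maximum on the nonzero vectors of every (nontrivial) subspace, for `1 ≤ k ≤ r`:
the min over `(n-r+k)`-dimensional subspaces `S ⊆ ℝ^n` of the max of `f` over nonzero
`x ∈ S` is at least the min over `k`-dimensional subspaces `T ⊆ ℝ^r` of the max of
`f ∘ p` over nonzero `x̃ ∈ T`. -/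
theorem minmax_ge_of_subspace {n r : ℕ} (hrn : r < n)
    (F : Submodule ℝ (Fin n → ℝ)) (hF : Module.finrank ℝ F = r)
    (p : (Fin r → ℝ) ≃ₗ[ℝ] F)
    (f : (Fin n → ℝ) → ℝ)
    (hmin : ∀ S : Submodule ℝ (Fin n → ℝ), (∃ x ∈ S, x ≠ 0) →
      ∃ x ∈ S, x ≠ 0 ∧ ∀ y ∈ S, y ≠ 0 → f x ≤ f y)
    (hmax : ∀ S : Submodule ℝ (Fin n → ℝ), (∃ x ∈ S, x ≠ 0) →
      ∃ x ∈ S, x ≠ 0 ∧ ∀ y ∈ S, y ≠ 0 → f y ≤ f x)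
    (k : ℕ) (hk1 : 1 ≤ k) (hkr : k ≤ r) :
    sInf {a : ℝ | ∃ T : Submodule ℝ (Fin r → ℝ), Module.finrank ℝ T = k ∧
        a = sSup ((fun y => f ((p y : Fin n → ℝ))) '' {y | y ∈ T ∧ y ≠ 0})} ≤
    sInf {a : ℝ | ∃ S : Submodule ℝ (Fin n → ℝ), Module.finrank ℝ S = n - r + k ∧
        a = sSup (f '' {x | x ∈ S ∧ x ≠ 0})} := by
  set q : (Fin r → ℝ) →ₗ[ℝ] (Fin n → ℝ) := F.subtype ∘ₗ p.toLinearMap with hq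
  have hqinj : Function.Injective q := F.injective_subtype.comp p.injective
  -- minimum of f on F
  have hFne : ∃ x ∈ F, x ≠ 0 := by
    apply submodule_exists_ne_zero_of_finrank_pos
    rw [hF]; omega
  obtain ⟨xm, hxmF, hxm0, hxmmin⟩ := hmin F hFne
  set m := f xm with hm
  -- for every T of finrank k, the corresponding sSup is in the LHS set and is ≥ m
  have key : ∀ T : Submodule ℝ (Fin r → ℝ), finrank ℝ T = k →
      m ≤ sSup ((fun y => f ((p y : Fin n → ℝ))) '' {y | y ∈ T ∧ y ≠ 0}) := by
    intro T hT
    have hTne : ∃ y ∈ T, y ≠ 0 := by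
      apply submodule_exists_ne_zero_of_finrank_pos; rw [hT]; omega
    obtain ⟨y0, hy0T, hy00⟩ := hTne
    -- image subspace in ℝ^n
    have hmapne : ∃ x ∈ T.map q, x ≠ 0 := by
      exact ⟨q y0, Submodule.mem_map_of_mem hy0T, fun h =>
        hy00 (hqinj (by simpa using h))⟩
    obtain ⟨xM, hxMmem, hxM0, hxMmax⟩ := hmax (T.map q) hmapne
    have hbdd : BddAbove ((fun y => f ((p y : Fin n → ℝ))) '' {y | y ∈ T ∧ y ≠ 0}) := by
      refine ⟨f xM, ?_⟩
      rintro a ⟨y, ⟨hyT, hy0⟩, rfl⟩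
      exact hxMmax (q y) (Submodule.mem_map_of_mem hyT)
        (fun h => hy0 (hqinj (by simpa using h)))
    have hmem : f ((p y0 : Fin n → ℝ)) ∈
        (fun y => f ((p y : Fin n → ℝ))) '' {y | y ∈ T ∧ y ≠ 0} :=
      ⟨y0, ⟨hy0T, hy00⟩, rfl⟩
    have hge : m ≤ f ((p y0 : Fin n → ℝ)) := by
      apply hxmmin
      · exact (p y0).2
      · intro h
        exact hy00 (by simpa using p.injective (Subtype.ext (by simpa using h)))
    exact hge.trans (le_csSup hbdd hmem)
  -- the LHS set is bounded below by m
  have hAbdd : BddBelow {a : ℝ | ∃ T : Submodule ℝ (Fin r → ℝ), Module.finrank ℝ T = k ∧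
      a = sSup ((fun y => f ((p y : Fin n → ℝ))) '' {y | y ∈ T ∧ y ≠ 0})} := by
    refine ⟨m, ?_⟩
    rintro a ⟨T, hT, rfl⟩
    exact key T hT
  -- RHS set is nonempty
  have hBne : {a : ℝ | ∃ S : Submodule ℝ (Fin n → ℝ), Module.finrank ℝ S = n - r + k ∧
      a = sSup (f '' {x | x ∈ S ∧ x ≠ 0})}.Nonempty := by
    have h1 : n - r + k ≤ finrank ℝ (Fin n → ℝ) := by
      rw [Module.finrank_pi]; simpa using by omega
    obtain ⟨S, hS⟩ := exists_submodule_finrank_eq' h1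
    exact ⟨_, S, hS, rfl⟩
  refine le_csInf hBne ?_
  rintro b ⟨S, hS, rfl⟩
  -- S ⊓ F has finrank ≥ k
  have hSFfin : k ≤ finrank ℝ ↥(S ⊓ F) := by
    have hsum := Submodule.finrank_sup_add_finrank_inf_eq S F
    have hle : finrank ℝ ↥(S ⊔ F) ≤ n := by
      have := Submodule.finrank_le (S ⊔ F)
      rwa [Module.finrank_pi, Fintype.card_fin] at this
    omega
  -- a linearly independent family of size k inside S ⊓ F
  obtain ⟨v, hv⟩ := exists_linearIndependent_of_le_finrank (R := ℝ) (M := ↥(S ⊓ F)) hSFfin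
  have hvc : LinearIndependent ℝ ((S ⊓ F).subtype ∘ v) :=
    hv.map' (S ⊓ F).subtype (Submodule.ker_subtype _)
  -- pull back to ℝ^r via p
  set u : Fin k → (Fin r → ℝ) := fun i => p.symm ⟨((S ⊓ F).subtype (v i)),
    ((v i).2 : (v i : Fin n → ℝ) ∈ S ⊓ F).2⟩ with hu
  have hqu : ∀ i, q (u i) = (S ⊓ F).subtype (v i) := by
    intro i; simp [hu, hq]
  have huli : LinearIndependent ℝ u := by
    have : LinearIndependent ℝ (q ∘ u) := by
      convert hvc using 1; ext i; simp [hqu i]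
    exact this.of_comp q
  set T : Submodule ℝ (Fin r → ℝ) := span ℝ (Set.range u) with hT
  have hTk : finrank ℝ T = k := by
    rw [hT, finrank_span_eq_card huli, Fintype.card_fin]
  -- q maps T into S
  have hTS : ∀ y ∈ T, q y ∈ S := by
    intro y hy
    have : q y ∈ (span ℝ (Set.range u)).map q := Submodule.mem_map_of_mem hy
    rw [Submodule.map_span] at this
    have hsub : q '' Set.range u ⊆ (S : Set (Fin n → ℝ)) := by
      rintro _ ⟨_, ⟨i, rfl⟩, rfl⟩
      rw [hqu i]
      exact ((v i).2 : (v i : Fin n → ℝ) ∈ S ⊓ F).1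
    exact (Submodule.span_le.mpr hsub) this
  -- sSup over T ≤ sSup over S
  have hSne : ∃ x ∈ S, x ≠ 0 := by
    apply submodule_exists_ne_zero_of_finrank_pos; rw [hS]; omega
  obtain ⟨xM, hxMS, hxM0, hxMmax⟩ := hmax S hSne
  have hSbdd : BddAbove (f '' {x | x ∈ S ∧ x ≠ 0}) := by
    refine ⟨f xM, ?_⟩
    rintro a ⟨x, ⟨hxS, hx0⟩, rfl⟩
    exact hxMmax x hxS hx0
  have hsub : ((fun y => f ((p y : Fin n → ℝ))) '' {y | y ∈ T ∧ y ≠ 0}) ⊆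
      f '' {x | x ∈ S ∧ x ≠ 0} := by
    rintro _ ⟨y, ⟨hyT, hy0⟩, rfl⟩
    refine ⟨q y, ⟨hTS y hyT, fun h => hy0 (hqinj (by simpa using h))⟩, rfl⟩
  have hTne' : ((fun y => f ((p y : Fin n → ℝ))) '' {y | y ∈ T ∧ y ≠ 0}).Nonempty := by
    obtain ⟨y0, hy0T, hy00⟩ : ∃ y ∈ T, y ≠ 0 := by
      apply submodule_exists_ne_zero_of_finrank_pos; rw [hTk]; omega
    exact ⟨_, y0, ⟨hy0T, hy00⟩, rfl⟩
  have hle : sSup ((fun y => f ((p y : Fin n → ℝ))) '' {y | y ∈ T ∧ y ≠ 0}) ≤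
      sSup (f '' {x | x ∈ S ∧ x ≠ 0}) := csSup_le_csSup hSbdd hTne' hsub
  exact le_trans (csInf_le hAbdd ⟨T, hTk, rfl⟩) hle
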